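/- arXiv:1912.06975 — 2 statements merged into one kernel-verified Lean document; each statement's English description precedes it below -/
import Mathlib

section
/- Assume Condition (9), i.e., R_s/R_D2D < P_s/(P_Rx + P_Tx). Then the multi-file value function v(S) = ∑_{m=1}^M ( ∑_{i ∈ S ∩ D_m} U_{i,m} − a·X_m·C_m(S) ) is supermodular: for all coalitions S1, S2 ⊆ N, v(S1) + v(S2) ≤ v(S1 ∪ S2) + v(S1 ∩ S2). -/
/-!
For each file the utility part of `v` is modular, and the cost `C_m(S)` depends only on
`k = |S ∩ D_m|`. As a function of `k` its increments are `P_s/R_s`, `(P_Tx + P_Rx)/R_D2D`,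
`P_Rx/R_D2D`, `P_Rx/R_D2D`, …; Condition (9) says exactly that the second is below the first,
so the increments are nonincreasing. A function of the cardinality with nonincreasing
increments is submodular, hence `v` is supermodular.
-/

open Finset

/-- The per-unit-size minimum energy cost `C_m(S)` of a coalition `S` for a file
requested by the users in `D`. -/
noncomputable def Ccost {α : Type*} [DecidableEq α]
    (Ps Rs PTx PRx RD2D : ℝ) (D S : Finset α) : ℝ :=
  if (S ∩ D) = ∅ then 0
  else if (S ∩ D).card = 1 then Ps / Rs
  else Ps / Rs + PTx / RD2D + (((S ∩ D).card : ℝ) - 1) * (PRx / RD2D)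

section AntitoneIncrements

variable {β : Type*} [AddCommGroup β] [PartialOrder β] [IsOrderedAddMonoid β] {f : ℕ → β}

theorem sub_le_sub_of_antitone_increments (hf : Antitone fun n => f (n + 1) - f n)
    {i j : ℕ} (hij : i ≤ j) (d : ℕ) : f (j + d) - f j ≤ f (i + d) - f i := by
  induction d with
  | zero => simp
  | succ d ih =>
    have hstep : f (j + d + 1) - f (j + d) ≤ f (i + d + 1) - f (i + d) := hf (by omega)
    calc f (j + (d + 1)) - f j = (f (j + d + 1) - f (j + d)) + (f (j + d) - f j) := by
          rw [← add_assoc]; abel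
      _ ≤ (f (i + d + 1) - f (i + d)) + (f (i + d) - f i) := add_le_add hstep ih
      _ = f (i + (d + 1)) - f i := by rw [← add_assoc]; abel

theorem apply_card_union_add_apply_card_inter_le {α : Type*} [DecidableEq α]
    (hf : Antitone fun n => f (n + 1) - f n) (s t : Finset α) :
    f #(s ∪ t) + f #(s ∩ t) ≤ f #s + f #t := by
  have h := sub_le_sub_of_antitone_increments hf (card_le_card (inter_subset_right : s ∩ t ⊆ t))
    #(s \ t)
  rwa [add_comm #t, card_sdiff_add_card, card_inter_add_card_sdiff, sub_le_sub_iff] at h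

end AntitoneIncrements

noncomputable def cardCost (c b r : ℝ) : ℕ → ℝ
  | 0 => 0
  | 1 => c
  | n + 2 => c + b + n * r

theorem antitone_cardCost_increments {c b r : ℝ} (hbc : b ≤ c) (hrb : r ≤ b) :
    Antitone fun n => cardCost c b r (n + 1) - cardCost c b r n := by
  refine antitone_nat_of_succ_le fun n => ?_
  match n with
  | 0 => simpa [cardCost] using hbc
  | 1 => simpa [cardCost] using hrb
  | n + 2 => simp only [cardCost]; push_cast; linarith

theorem Ccost_eq_cardCost {α : Type*} [DecidableEq α] (Ps Rs PTx PRx RD2D : ℝ)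
    (D S : Finset α) :
    Ccost Ps Rs PTx PRx RD2D D S =
      cardCost (Ps / Rs) ((PTx + PRx) / RD2D) (PRx / RD2D) #(S ∩ D) := by
  unfold Ccost
  match h : #(S ∩ D) with
  | 0 => simp [card_eq_zero.mp h, cardCost]
  | n + 1 =>
    rw [if_neg (by rintro h0; simp [h0] at h)]
    rcases n with _ | n
    · simp [cardCost]
    · simp only [cardCost, Nat.add_eq_right, if_neg (by omega : n + 1 ≠ 0)]
      push_cast
      ring

theorem Ccost_union_add_Ccost_inter_le {α : Type*} [DecidableEq α] {Ps Rs PTx PRx RD2D : ℝ}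
    (hPTx : 0 ≤ PTx) (hRD2D : 0 ≤ RD2D) (hcost : (PTx + PRx) / RD2D ≤ Ps / Rs)
    (D S T : Finset α) :
    Ccost Ps Rs PTx PRx RD2D D (S ∪ T) + Ccost Ps Rs PTx PRx RD2D D (S ∩ T) ≤
      Ccost Ps Rs PTx PRx RD2D D S + Ccost Ps Rs PTx PRx RD2D D T := by
  have hrb : PRx / RD2D ≤ (PTx + PRx) / RD2D :=
    div_le_div_of_nonneg_right (le_add_of_nonneg_left hPTx) hRD2D
  simp only [Ccost_eq_cardCost]
  rw [union_inter_distrib_right, inter_inter_distrib_right]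
  exact apply_card_union_add_apply_card_inter_le (antitone_cardCost_increments hcost hrb) _ _

theorem multifile_value_supermodular_general
    {α : Type*} [DecidableEq α]
    (Ps Rs PTx PRx RD2D : ℝ)
    (hRs : 0 < Rs) (hPTx : 0 < PTx) (hPRx : 0 < PRx)
    (hRD2D : 0 < RD2D)
    (h9 : Rs / RD2D < Ps / (PRx + PTx))
    (M : ℕ) (X : Fin M → ℝ) (hX : ∀ m, 0 < X m)
    (Dm : Fin M → Finset α) (U : α → Fin M → ℝ)
    (a : ℝ) (ha : 0 < a)
    (v : Finset α → ℝ)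
    (hv : ∀ S : Finset α,
      v S = ∑ m : Fin M,
        ((∑ i ∈ S ∩ Dm m, U i m) - a * X m * Ccost Ps Rs PTx PRx RD2D (Dm m) S))
    (S1 S2 : Finset α) :
    v S1 + v S2 ≤ v (S1 ∪ S2) + v (S1 ∩ S2) := by
  have hcost : (PTx + PRx) / RD2D ≤ Ps / Rs := by
    rw [div_lt_div_iff₀ hRD2D (by positivity)] at h9
    rw [div_le_div_iff₀ hRD2D hRs]
    linarith
  rw [hv, hv, hv, hv, ← sum_add_distrib, ← sum_add_distrib]
  refine sum_le_sum fun m _ => ?_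
  have hU : ∑ i ∈ S1 ∩ Dm m, U i m + ∑ i ∈ S2 ∩ Dm m, U i m =
      ∑ i ∈ (S1 ∪ S2) ∩ Dm m, U i m + ∑ i ∈ (S1 ∩ S2) ∩ Dm m, U i m := by
    rw [union_inter_distrib_right, inter_inter_distrib_right, sum_union_inter]
  have hC := mul_le_mul_of_nonneg_left
    (Ccost_union_add_Ccost_inter_le hPTx.le hRD2D.le hcost (Dm m) S1 S2)
    (mul_pos ha (hX m)).le
  linear_combination hU + hC

/-- under Condition (9), the multi-file value function
`v(S) = ∑_m ( ∑_{i ∈ S ∩ D_m} U_{i,m} − a·X_m·C_m(S) )` is supermodular. -/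
theorem multifile_value_supermodular
    {α : Type*} [Fintype α] [DecidableEq α]
    (Ps Rs PTx PRx RD2D : ℝ)
    (hPs : 0 < Ps) (hRs : 0 < Rs) (hPTx : 0 < PTx) (hPRx : 0 < PRx)
    (hRD2D : 0 < RD2D)
    (h9 : Rs / RD2D < Ps / (PRx + PTx))
    (M : ℕ) (X : Fin M → ℝ) (hX : ∀ m, 0 < X m)
    (Dm : Fin M → Finset α) (U : α → Fin M → ℝ)
    (a : ℝ) (ha : 0 < a)
    (v : Finset α → ℝ)
    (hv : ∀ S : Finset α,
      v S = ∑ m : Fin M,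
        ((∑ i ∈ S ∩ Dm m, U i m) - a * X m * Ccost Ps Rs PTx PRx RD2D (Dm m) S))
    (S1 S2 : Finset α) :
    v S1 + v S2 ≤ v (S1 ∪ S2) + v (S1 ∩ S2) :=
  multifile_value_supermodular_general Ps Rs PTx PRx RD2D hRs hPTx hPRx hRD2D h9 M X hX Dm U a ha v
    hv S1 S2
end

section
/- If P is a strictly D_c-stable partition of N, then P is the strict maximizer of value among all partitions of N: for every partition Q of N with Q ≠ P, v(Q) < v(P), where the value of a partition is the sum of the values of its blocks. -/
open Finset

variable {α : Type*} [Fintype α] [DecidableEq α]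

/-- A partition of the player set `N`: a family of pairwise disjoint nonempty
subsets whose union is `N`. -/
def IsPartition (P : Finset (Finset α)) : Prop :=
  (∀ B ∈ P, B.Nonempty) ∧ (P : Set (Finset α)).PairwiseDisjoint id ∧
    P.sup id = Finset.univ

/-- A collection in `N`: a family of pairwise disjoint nonempty subsets of `N`. -/
def IsCollection (C : Finset (Finset α)) : Prop :=
  (∀ B ∈ C, B.Nonempty) ∧ (C : Set (Finset α)).PairwiseDisjoint id

/-- The value of a collection (or partition): the sum of the values of its blocks. -/
def collVal (v : Finset α → ℝ) (C : Finset (Finset α)) : ℝ := ∑ B ∈ C, v B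

/-- `S[P]`: the collection consisting of the nonempty sets among
`(S_1 ∪ ⋯ ∪ S_k) ∩ P_j`, for the blocks `P_j` of `P`. -/
def restrictColl (C P : Finset (Finset α)) : Finset (Finset α) :=
  (P.image fun Pj => C.sup id ∩ Pj).filter fun B => B.Nonempty

/-- `P` is `D_c`-stable: `v(S[P]) ≥ v(S)` for every collection `S` in `N`. -/
def DcStable (v : Finset α → ℝ) (P : Finset (Finset α)) : Prop :=
  ∀ C : Finset (Finset α), IsCollection C →
    collVal v (restrictColl C P) ≥ collVal v C

/-- `P` is strictly `D_c`-stable: strict superadditivity for `P`-compatible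
collections with at least two blocks, and strict gain from splitting any
`P`-incompatible coalition along `P`. -/
def StrictlyDcStable (v : Finset α → ℝ) (P : Finset (Finset α)) : Prop :=
  (∀ C : Finset (Finset α), IsCollection C → 2 ≤ C.card →
      (∃ Pj ∈ P, C.sup id ⊆ Pj) → v (C.sup id) > ∑ B ∈ C, v B) ∧
  (∀ S : Finset α, (∀ Pj ∈ P, ¬ S ⊆ Pj) →
      (∑ Pj ∈ P.filter fun Pj => (S ∩ Pj).Nonempty, v (S ∩ Pj)) > v S)

/-!
Both values are compared with the double sum `∑ S ∈ Q, ∑ Pj ∈ P, v (S ∩ Pj)`. Splitting a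
block `S` of `Q` along `P` never loses value (nothing changes if `S` lies in one block of `P`,
and the second stability condition gives a strict gain otherwise), so `v(Q)` is at most the
double sum. Merging the traces `Pj ∩ S` of `Q` on a block `Pj` never loses value either (the
first stability condition, strict as soon as `Pj` meets two blocks of `Q`), so the double sum
is at most `v(P)`. If neither step is strict, every block of either partition lies inside a
block of the other, which forces `Q = P`.
-/

section

omit [Fintype α]

variable {v : Finset α → ℝ}

theorem sum_eq_sup_of_card_le_one (hv0 : v ∅ = 0) {C : Finset (Finset α)} (hC : C.card ≤ 1) :
    ∑ B ∈ C, v B = v (C.sup id) := by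
  obtain rfl | hne := C.eq_empty_or_nonempty
  · simp [hv0]
  · obtain ⟨B, rfl⟩ := card_eq_one.mp (le_antisymm hC hne.card_pos)
    simp

theorem sum_inter_eq_of_subset (hv0 : v ∅ = 0) {P : Finset (Finset α)}
    (hP : (P : Set (Finset α)).PairwiseDisjoint id) {S Pj : Finset α} (hPj : Pj ∈ P)
    (hS : S ⊆ Pj) : ∑ Pk ∈ P, v (S ∩ Pk) = v S := by
  rw [sum_eq_single_of_mem Pj hPj, inter_eq_left.mpr hS]
  intro Pk hPk hne
  have hdisj : Disjoint S Pk := (hP hPj hPk hne.symm).mono_left hS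
  rw [disjoint_iff_inter_eq_empty.mp hdisj, hv0]

theorem sum_filter_inter_nonempty (hv0 : v ∅ = 0) (S : Finset α) (P : Finset (Finset α)) :
    ∑ Pj ∈ P with (S ∩ Pj).Nonempty, v (S ∩ Pj) = ∑ Pj ∈ P, v (S ∩ Pj) :=
  sum_filter_of_ne fun Pj _ h => nonempty_iff_ne_empty.mpr fun h0 => h (by rw [h0, hv0])

theorem isCollection_restrictColl {P : Finset (Finset α)}
    (hP : (P : Set (Finset α)).PairwiseDisjoint id) (C : Finset (Finset α)) :
    IsCollection (restrictColl C P) := by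
  refine ⟨fun B hB => (mem_filter.mp hB).2, ?_⟩
  rintro _ h₁ _ h₂ hne
  obtain ⟨P₁, hP₁, rfl⟩ := mem_image.mp (mem_filter.mp (mem_coe.mp h₁)).1
  obtain ⟨P₂, hP₂, rfl⟩ := mem_image.mp (mem_filter.mp (mem_coe.mp h₂)).1
  have hP₁₂ : P₁ ≠ P₂ := by rintro rfl; exact hne rfl
  exact (hP hP₁ hP₂ hP₁₂).mono inter_subset_right inter_subset_right

theorem sup_restrictColl (C P : Finset (Finset α)) :
    (restrictColl C P).sup id = C.sup id ∩ P.sup id := by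
  ext x
  simp only [restrictColl, mem_sup, mem_filter, mem_image, id_eq, ↓existsAndEq, and_true, mem_inter]
  constructor
  · rintro ⟨Pj, ⟨hPj, -⟩, hxC, hxPj⟩
    exact ⟨hxC, Pj, hPj, hxPj⟩
  · rintro ⟨hxC, Pj, hPj, hxPj⟩
    exact ⟨Pj, ⟨hPj, x, mem_inter.mpr ⟨mem_sup.mpr hxC, hxPj⟩⟩, hxC, hxPj⟩

theorem collVal_restrictColl (hv0 : v ∅ = 0) {P : Finset (Finset α)}
    (hP : (P : Set (Finset α)).PairwiseDisjoint id) (C : Finset (Finset α)) :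
    collVal v (restrictColl C P) = ∑ Pj ∈ P, v (C.sup id ∩ Pj) := by
  have hinj : Set.InjOn (C.sup id ∩ ·) (P.filter fun Pj => (C.sup id ∩ Pj).Nonempty) := by
    intro P₁ h₁ P₂ h₂ heq
    obtain ⟨hP₁, hne₁⟩ := mem_filter.mp (mem_coe.mp h₁)
    obtain ⟨hP₂, -⟩ := mem_filter.mp (mem_coe.mp h₂)
    by_contra hne
    have hdisj : Disjoint (C.sup id ∩ P₁) (C.sup id ∩ P₂) :=
      (hP hP₁ hP₂ hne).mono inter_subset_right inter_subset_right
    rw [← show C.sup id ∩ P₁ = C.sup id ∩ P₂ from heq, disjoint_self] at hdisj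
    exact hne₁.ne_empty hdisj
  rw [collVal, restrictColl, filter_image, sum_image hinj, sum_filter_inter_nonempty hv0]

theorem exists_superset_of_card_restrictColl_le_one {Q : Finset (Finset α)} {T : Finset α}
    (hTQ : T ⊆ Q.sup id) (hT : T.Nonempty) (h1 : (restrictColl {T} Q).card ≤ 1) :
    ∃ S ∈ Q, T ⊆ S := by
  have hcover : ∀ x ∈ T, ∃ S ∈ Q, x ∈ S ∧ T ∩ S ∈ restrictColl {T} Q := by
    intro x hx
    obtain ⟨S, hS, hxS⟩ := mem_sup.mp (hTQ hx)
    exact ⟨S, hS, hxS, mem_filter.mpr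
      ⟨mem_image.mpr ⟨S, hS, by rw [sup_singleton, id]⟩, x, mem_inter.mpr ⟨hx, hxS⟩⟩⟩
  obtain ⟨x, hx⟩ := hT
  obtain ⟨S, hS, -, hTS⟩ := hcover x hx
  refine ⟨S, hS, fun y hy => ?_⟩
  obtain ⟨S', -, hyS', hTS'⟩ := hcover y hy
  have hy' : y ∈ T ∩ S' := mem_inter.mpr ⟨hy, hyS'⟩
  rw [card_le_one.mp h1 _ hTS' _ hTS] at hy'
  exact (mem_inter.mp hy').2

def Refines (Q P : Finset (Finset α)) : Prop := ∀ S ∈ Q, ∃ Pj ∈ P, S ⊆ Pj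

omit [DecidableEq α] in
theorem subset_of_refines_of_refines {P Q : Finset (Finset α)} (hQne : ∀ S ∈ Q, S.Nonempty)
    (hQ : (Q : Set (Finset α)).PairwiseDisjoint id) (hQP : Refines Q P) (hPQ : Refines P Q) :
    Q ⊆ P := by
  intro S hS
  obtain ⟨Pj, hPj, hSPj⟩ := hQP S hS
  obtain ⟨S', hS', hPjS'⟩ := hPQ Pj hPj
  obtain rfl : S = S' := by
    by_contra hne
    exact (hQne S hS).ne_empty ((hQ hS hS' hne).eq_bot_of_le (hSPj.trans hPjS'))
  rwa [hSPj.antisymm hPjS']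

namespace StrictlyDcStable

variable {P : Finset (Finset α)}

theorem lt_sum_inter (hstab : StrictlyDcStable v P) (hv0 : v ∅ = 0) {S : Finset α}
    (hS : ∀ Pj ∈ P, ¬ S ⊆ Pj) : v S < ∑ Pj ∈ P, v (S ∩ Pj) :=
  sum_filter_inter_nonempty hv0 S P ▸ hstab.2 S hS

theorem le_sum_inter (hstab : StrictlyDcStable v P) (hv0 : v ∅ = 0)
    (hP : (P : Set (Finset α)).PairwiseDisjoint id) (S : Finset α) :
    v S ≤ ∑ Pj ∈ P, v (S ∩ Pj) := by
  by_cases hS : ∀ Pj ∈ P, ¬ S ⊆ Pj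
  · exact (hstab.lt_sum_inter hv0 hS).le
  · push Not at hS
    obtain ⟨Pj, hPj, hSPj⟩ := hS
    exact (sum_inter_eq_of_subset hv0 hP hPj hSPj).ge

theorem sum_inter_lt [Fintype α] (hstab : StrictlyDcStable v P) (hv0 : v ∅ = 0)
    {Q : Finset (Finset α)} (hQ : IsPartition Q) {Pj : Finset α} (hPj : Pj ∈ P)
    (h2 : 2 ≤ (restrictColl {Pj} Q).card) : ∑ S ∈ Q, v (Pj ∩ S) < v Pj := by
  have hsup : (restrictColl {Pj} Q).sup id = Pj := by
    rw [sup_restrictColl, hQ.2.2, sup_singleton, id, inter_univ]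
  have := hstab.1 _ (isCollection_restrictColl hQ.2.1 {Pj}) h2 ⟨Pj, hPj, hsup.le⟩
  rwa [hsup, ← collVal, collVal_restrictColl hv0 hQ.2.1, sup_singleton, id] at this

theorem sum_inter_le [Fintype α] (hstab : StrictlyDcStable v P) (hv0 : v ∅ = 0)
    {Q : Finset (Finset α)} (hQ : IsPartition Q) {Pj : Finset α} (hPj : Pj ∈ P) :
    ∑ S ∈ Q, v (Pj ∩ S) ≤ v Pj := by
  obtain h2 | h1 := le_or_gt 2 (restrictColl {Pj} Q).card
  · exact (hstab.sum_inter_lt hv0 hQ hPj h2).le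
  · have := sum_eq_sup_of_card_le_one hv0 (Nat.lt_succ_iff.mp h1)
    rw [← collVal, collVal_restrictColl hv0 hQ.2.1, sup_restrictColl, hQ.2.2] at this
    simpa using this.le

end StrictlyDcStable

end

namespace IsPartition

variable {P Q : Finset (Finset α)}

theorem eq_of_refines_of_refines (hQ : IsPartition Q) (hP : IsPartition P)
    (hQP : Refines Q P) (hPQ : Refines P Q) : Q = P :=
  (subset_of_refines_of_refines hQ.1 hQ.2.1 hQP hPQ).antisymm
    (subset_of_refines_of_refines hP.1 hP.2.1 hPQ hQP)

theorem exists_incompatible_or_split (hQ : IsPartition Q) (hP : IsPartition P) (hne : Q ≠ P) :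
    (∃ S ∈ Q, ∀ Pj ∈ P, ¬ S ⊆ Pj) ∨ ∃ Pj ∈ P, 2 ≤ (restrictColl {Pj} Q).card := by
  by_contra! h
  obtain ⟨hQP, hunsplit⟩ := h
  refine hne (hQ.eq_of_refines_of_refines hP hQP fun Pj hPj => ?_)
  exact exists_superset_of_card_restrictColl_le_one (hQ.2.2 ▸ subset_univ Pj) (hP.1 Pj hPj)
    (Nat.lt_succ_iff.mp (hunsplit Pj hPj))

end IsPartition

theorem strictlyDcStable_strict_max_general {α : Type*} [Fintype α] [DecidableEq α]
    (v : Finset α → ℝ) (hv0 : v ∅ = 0)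
    (P : Finset (Finset α)) (hP : IsPartition P) (hstab : StrictlyDcStable v P) :
    ∀ Q : Finset (Finset α), IsPartition Q → Q ≠ P →
      collVal v Q < collVal v P := by
  intro Q hQ hne
  have hsplitQ : ∀ S ∈ Q, v S ≤ ∑ Pj ∈ P, v (S ∩ Pj) :=
    fun S _ => hstab.le_sum_inter hv0 hP.2.1 S
  have hmergeP : ∀ Pj ∈ P, ∑ S ∈ Q, v (Pj ∩ S) ≤ v Pj :=
    fun Pj hPj => hstab.sum_inter_le hv0 hQ hPj
  have hswap : ∑ S ∈ Q, ∑ Pj ∈ P, v (S ∩ Pj) = ∑ Pj ∈ P, ∑ S ∈ Q, v (Pj ∩ S) := by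
    rw [sum_comm]
    simp only [inter_comm]
  rcases hQ.exists_incompatible_or_split hP hne with ⟨S, hS, hinc⟩ | ⟨Pj, hPj, h2⟩
  · calc collVal v Q < ∑ S ∈ Q, ∑ Pj ∈ P, v (S ∩ Pj) :=
          sum_lt_sum hsplitQ ⟨S, hS, hstab.lt_sum_inter hv0 hinc⟩
      _ = ∑ Pj ∈ P, ∑ S ∈ Q, v (Pj ∩ S) := hswap
      _ ≤ collVal v P := sum_le_sum hmergeP
  · calc collVal v Q ≤ ∑ S ∈ Q, ∑ Pj ∈ P, v (S ∩ Pj) := sum_le_sum hsplitQ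
      _ = ∑ Pj ∈ P, ∑ S ∈ Q, v (Pj ∩ S) := hswap
      _ < collVal v P := sum_lt_sum hmergeP ⟨Pj, hPj, hstab.sum_inter_lt hv0 hQ hPj h2⟩

/-- a strictly `D_c`-stable partition `P` is the strict maximizer of
value among all partitions of `N`: every other partition has strictly smaller value. -/
theorem strictlyDcStable_strict_max {α : Type*} [Fintype α] [DecidableEq α] [Nonempty α]
    (v : Finset α → ℝ) (hv0 : v ∅ = 0)
    (P : Finset (Finset α)) (hP : IsPartition P) (hstab : StrictlyDcStable v P) :
    ∀ Q : Finset (Finset α), IsPartition Q → Q ≠ P →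
      collVal v Q < collVal v P :=
  strictlyDcStable_strict_max_general v hv0 P hP hstab
end
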